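/- Let S = {x ∈ ℝⁿ : P(x) = 0 and Qⱼ(x) > 0 for all j ∈ J} be a basic semi-algebraic set, where P and the Qⱼ (j in a finite set J) are real polynomials. Then there exist m ∈ ℕ, polynomials F, G : ℝⁿ × ℝᵐ → ℝ with G(x,·) convex on ℝᵐ for every fixed x, and a box 𝒴 ⊆ ℝᵐ, such that both the optimistic and the pessimistic value functions of the bilevel problem with upper level F, lower level G, and lower-level feasible set 𝒴 are equal to the characteristic function 𝟏_S (the function equal to 1 on S and 0 elsewhere). -/

import Mathlib

open Set

noncomputable section

/-- The lower-level argmin set `Θ(x) = {y ∈ 𝒴 : ∀ y' ∈ 𝒴, Q(x,y) ≤ Q(x,y')}`. -/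
def argminSet {n m : ℕ} (Q : (Fin n → ℝ) → (Fin m → ℝ) → ℝ) (Y : Set (Fin m → ℝ))
    (x : Fin n → ℝ) : Set (Fin m → ℝ) :=
  {y | y ∈ Y ∧ ∀ y' ∈ Y, Q x y ≤ Q x y'}

/-- Optimistic value function `φ_o(x) = inf_{y ∈ Θ(x)} P(x,y)`,
with the convention `inf ∅ = +∞`. -/
def valOpt {n m : ℕ} (P Q : (Fin n → ℝ) → (Fin m → ℝ) → ℝ) (Y : Set (Fin m → ℝ))
    (x : Fin n → ℝ) : EReal :=
  ⨅ y ∈ argminSet Q Y x, ((P x y : ℝ) : EReal)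

/-- Pessimistic value function `φ_p(x) = sup_{y ∈ Θ(x)} P(x,y)`,
with the convention `sup ∅ = -∞`. -/
def valPess {n m : ℕ} (P Q : (Fin n → ℝ) → (Fin m → ℝ) → ℝ) (Y : Set (Fin m → ℝ))
    (x : Fin n → ℝ) : EReal :=
  ⨆ y ∈ argminSet Q Y x, ((P x y : ℝ) : EReal)

/-- `P (x, y)` is a real polynomial in the joint variables `(x, y)`. -/
def IsPolyMap {n m : ℕ} (P : (Fin n → ℝ) → (Fin m → ℝ) → ℝ) : Prop :=
  ∃ p : MvPolynomial (Fin n ⊕ Fin m) ℝ,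
    ∀ x y, P x y = MvPolynomial.eval (Sum.elim x y) p

/-- Basic semi-algebraic subset of `ℝ^ι`. -/
def IsBasicSemialgebraic {ι : Type} [Fintype ι] (S : Set (ι → ℝ)) : Prop :=
  ∃ (p : MvPolynomial ι ℝ) (k : ℕ) (q : Fin k → MvPolynomial ι ℝ),
    S = {x | MvPolynomial.eval x p = 0 ∧ ∀ j, 0 < MvPolynomial.eval x (q j)}

/-- Semi-algebraic set: a finite union of basic semi-algebraic sets. -/
def IsSemialgebraic {ι : Type} [Fintype ι] (S : Set (ι → ℝ)) : Prop :=
  ∃ (N : ℕ) (T : Fin N → Set (ι → ℝ)),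
    (∀ i, IsBasicSemialgebraic (T i)) ∧ S = ⋃ i, T i

/-- Semi-algebraic real-valued function: its graph (inside `ℝ^{ι} × ℝ ≅ ℝ^{ι ⊕ Unit}`)
is semi-algebraic. -/
def IsSemialgebraicFun {ι : Type} [Fintype ι] (f : (ι → ℝ) → ℝ) : Prop :=
  IsSemialgebraic {z : (ι ⊕ Unit) → ℝ | f (z ∘ Sum.inl) = z (Sum.inr ())}

/-- Extended-real-valued semi-algebraic function: the sets where it is finite, `+∞`, `-∞`
are semi-algebraic, and the graph of its restriction to its (finite) domain is
semi-algebraic. -/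
def IsERealSemialgebraicFun {ι : Type} [Fintype ι] (h : (ι → ℝ) → EReal) : Prop :=
  IsSemialgebraic {x | ∃ r : ℝ, h x = (r : EReal)} ∧
  IsSemialgebraic {x | h x = ⊤} ∧
  IsSemialgebraic {x | h x = ⊥} ∧
  IsSemialgebraic {z : (ι ⊕ Unit) → ℝ | h (z ∘ Sum.inl) = ((z (Sum.inr ()) : ℝ) : EReal)}

/-- A (possibly unbounded) box `[a₁,b₁] × ⋯ × [aₘ,bₘ]` in `ℝ^m`, with
endpoints in `ℝ ∪ {±∞}`. -/
def IsBox {m : ℕ} (Y : Set (Fin m → ℝ)) : Prop :=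
  ∃ a b : Fin m → EReal,
    Y = {y | ∀ i, a i ≤ (y i : EReal) ∧ (y i : EReal) ≤ b i}

/-- The bounded box `[a₁,b₁] × ⋯ × [aₘ,bₘ]` with real endpoints. -/
def boundedBox {m : ℕ} (a b : Fin m → ℝ) : Set (Fin m → ℝ) :=
  {y | ∀ i, y i ∈ Set.Icc (a i) (b i)}

/-- Piecewise polynomial function: there is a finite partition of `ℝ^n` into pairwise
disjoint semi-algebraic sets on each of which `f` coincides with a polynomial. -/
def IsPiecewisePolynomial {n : ℕ} (f : (Fin n → ℝ) → ℝ) : Prop :=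
  ∃ (N : ℕ) (S : Fin N → Set (Fin n → ℝ)) (p : Fin N → MvPolynomial (Fin n) ℝ),
    (∀ i, IsSemialgebraic (S i)) ∧
    (∀ i j, i ≠ j → Disjoint (S i) (S j)) ∧
    (⋃ i, S i) = Set.univ ∧
    (∀ i, ∀ x ∈ S i, f x = MvPolynomial.eval x (p i))

/-!
Put `a₀ = P²` and `a_{j+1} = Q_j`, take the box `𝒴 = [0, ∞)^{k+1}` and the convex lower level
`G(x, v) = ∑ᵢ (aᵢ(x) vᵢ - 1)²`. It is separable, and over `t ≥ 0` the term `(a t - 1)²` is minimal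
exactly when `a t = 1` if `a > 0` and `a t = 0` if `a ≤ 0`. So every lower-level solution `v`
has `aᵢ(x) vᵢ = 𝟏[aᵢ(x) > 0]`, and the upper level `F(x, v) = (1 - a₀ v₀) ∏ⱼ a_{j+1} v_{j+1}`
takes the single value `𝟏[P(x) = 0] ∏ⱼ 𝟏[Q_j(x) > 0] = 𝟏_S(x)` on the whole argmin set.
-/

open MvPolynomial

theorem mem_argminSet_iff_isMinOn {n m : ℕ} {Q : (Fin n → ℝ) → (Fin m → ℝ) → ℝ}
    {Y : Set (Fin m → ℝ)} {x : Fin n → ℝ} {y : Fin m → ℝ} :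
    y ∈ argminSet Q Y x ↔ y ∈ Y ∧ IsMinOn (Q x) Y y := by
  rw [isMinOn_iff]; rfl

theorem valOpt_eq_of_forall_mem_argminSet {n m : ℕ} {P Q : (Fin n → ℝ) → (Fin m → ℝ) → ℝ}
    {Y : Set (Fin m → ℝ)} {x : Fin n → ℝ} {c : ℝ} (hne : (argminSet Q Y x).Nonempty)
    (hP : ∀ y ∈ argminSet Q Y x, P x y = c) : valOpt P Q Y x = c := by
  rw [valOpt, biInf_congr fun y hy => congrArg _ (hP y hy), biInf_const hne]

theorem valPess_eq_of_forall_mem_argminSet {n m : ℕ} {P Q : (Fin n → ℝ) → (Fin m → ℝ) → ℝ}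
    {Y : Set (Fin m → ℝ)} {x : Fin n → ℝ} {c : ℝ} (hne : (argminSet Q Y x).Nonempty)
    (hP : ∀ y ∈ argminSet Q Y x, P x y = c) : valPess P Q Y x = c := by
  rw [valPess, biSup_congr fun y hy => congrArg _ (hP y hy), biSup_const hne]

theorem isMinOn_pi_sum_iff {ι β : Type*} [Fintype ι] [DecidableEq ι] {α : ι → Type*}
    [AddCommMonoid β] [PartialOrder β] [IsOrderedCancelAddMonoid β]
    {s : ∀ i, Set (α i)} {f : ∀ i, α i → β} {v : ∀ i, α i} (hv : v ∈ Set.univ.pi s) :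
    IsMinOn (fun w => ∑ i, f i (w i)) (Set.univ.pi s) v ↔ ∀ i, IsMinOn (f i) (s i) (v i) := by
  simp only [isMinOn_iff]
  constructor
  · intro hmin i t ht
    have hupdate : Function.update v i t ∈ Set.univ.pi s := by
      intro j _
      rcases eq_or_ne j i with rfl | hj
      · simpa using ht
      · simpa [hj] using hv j trivial
    have hrest : ∑ j ∈ Finset.univ.erase i, f j (Function.update v i t j) =
        ∑ j ∈ Finset.univ.erase i, f j (v j) :=
      Finset.sum_congr rfl fun j hj => by rw [Function.update_of_ne (Finset.ne_of_mem_erase hj)]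
    have key := hmin _ hupdate
    rw [← Finset.add_sum_erase _ _ (Finset.mem_univ i),
      ← Finset.add_sum_erase _ _ (Finset.mem_univ i), hrest, Function.update_self] at key
    exact le_of_add_le_add_right key
  · intro hmin w hw
    exact Finset.sum_le_sum fun i _ => hmin i (w i) (hw i trivial)

theorem isMinOn_sq_mul_sub_one_Ici_iff {c t : ℝ} (ht : 0 ≤ t) :
    IsMinOn (fun s => (c * s - 1) ^ 2) (Set.Ici 0) t ↔ c * t = if 0 < c then 1 else 0 := by
  rw [isMinOn_iff]
  constructor
  · intro hmin
    split_ifs with hc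
    · have := hmin c⁻¹ (inv_nonneg.mpr hc.le)
      rw [mul_inv_cancel₀ hc.ne'] at this
      nlinarith
    · have hct : c * t ≤ 0 := mul_nonpos_of_nonpos_of_nonneg (not_lt.mp hc) ht
      have := hmin 0 Set.self_mem_Ici
      nlinarith
  · intro hct s hs
    rw [hct]
    split_ifs with hc
    · simpa using sq_nonneg (c * s - 1)
    · nlinarith [mul_nonpos_of_nonpos_of_nonneg (not_lt.mp hc) hs]

theorem convexOn_sum_sq_mul_sub_one {ι : Type*} [Fintype ι] (a : ι → ℝ) :
    ConvexOn ℝ Set.univ fun v : ι → ℝ => ∑ i, (a i * v i - 1) ^ 2 := by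
  have hterm (i : ι) : ConvexOn ℝ Set.univ fun v : ι → ℝ => (a i * v i - 1) ^ 2 := by
    let g : (ι → ℝ) →ᵃ[ℝ] ℝ :=
      (a i • LinearMap.proj i : (ι → ℝ) →ₗ[ℝ] ℝ).toAffineMap - AffineMap.const ℝ (ι → ℝ) 1
    have hg (v : ι → ℝ) : g v = a i * v i - 1 := by simp [g]
    simpa only [Function.comp_def, hg, Set.preimage_univ] using
      (even_two.convexOn_pow (𝕜 := ℝ)).comp_affineMap g
  simpa [Finset.sum_fn] using Finset.sum_induction _ (ConvexOn ℝ Set.univ)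
    (fun _ _ => ConvexOn.add) (convexOn_const 0 convex_univ) fun i _ => hterm i

namespace BasicSemialgebraicBilevel

variable {n k : ℕ} (p : MvPolynomial (Fin n) ℝ) (q : Fin k → MvPolynomial (Fin n) ℝ)

def weight : Fin (k + 1) → MvPolynomial (Fin n) ℝ := Fin.cons (p ^ 2) q

def upper (x : Fin n → ℝ) (v : Fin (k + 1) → ℝ) : ℝ :=
  (1 - eval x (p ^ 2) * v 0) * ∏ j, eval x (q j) * v j.succ

def lower (x : Fin n → ℝ) (v : Fin (k + 1) → ℝ) : ℝ :=
  ∑ i, (eval x (weight p q i) * v i - 1) ^ 2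

def box (k : ℕ) : Set (Fin (k + 1) → ℝ) := Set.univ.pi fun _ => Set.Ici 0

theorem isBox_box : IsBox (box k) := by
  refine ⟨0, ⊤, ?_⟩
  ext v
  simp [box, Pi.le_def]

theorem isPolyMap_upper : IsPolyMap (upper p q) := by
  refine ⟨(1 - rename Sum.inl (p ^ 2) * X (Sum.inr 0)) *
    ∏ j, rename Sum.inl (q j) * X (Sum.inr j.succ), fun x v => ?_⟩
  simp [upper, eval_rename]

theorem isPolyMap_lower : IsPolyMap (lower p q) := by
  refine ⟨∑ i, (rename Sum.inl (weight p q i) * X (Sum.inr i) - 1) ^ 2, fun x v => ?_⟩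
  simp [lower, eval_rename]

theorem convexOn_lower (x : Fin n → ℝ) : ConvexOn ℝ Set.univ (lower p q x) :=
  convexOn_sum_sq_mul_sub_one _

theorem mem_argminSet_lower_iff {x : Fin n → ℝ} {v : Fin (k + 1) → ℝ} :
    v ∈ argminSet (lower p q) (box k) x ↔
      ∀ i, 0 ≤ v i ∧ eval x (weight p q i) * v i = if 0 < eval x (weight p q i) then 1 else 0 := by
  have hsum (hv : v ∈ box k) := isMinOn_pi_sum_iff
    (f := fun i t => (eval x (weight p q i) * t - 1) ^ 2) (s := fun _ => Set.Ici 0) hv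
  rw [mem_argminSet_iff_isMinOn]
  constructor
  · rintro ⟨hv, hmin⟩ i
    exact ⟨hv i trivial, (isMinOn_sq_mul_sub_one_Ici_iff (hv i trivial)).1 ((hsum hv).1 hmin i)⟩
  · intro h
    have hv : v ∈ box k := fun i _ => (h i).1
    exact ⟨hv, (hsum hv).2 fun i => (isMinOn_sq_mul_sub_one_Ici_iff (h i).1).2 (h i).2⟩

theorem argminSet_lower_nonempty (x : Fin n → ℝ) :
    (argminSet (lower p q) (box k) x).Nonempty := by
  refine ⟨fun i => (if 0 < eval x (weight p q i) then 1 else 0) / eval x (weight p q i),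
    (mem_argminSet_lower_iff p q).2 fun i => ?_⟩
  split_ifs with h
  · exact ⟨by positivity, mul_div_cancel₀ _ h.ne'⟩
  · simp

theorem upper_eq_of_mem_argminSet {x : Fin n → ℝ} {v : Fin (k + 1) → ℝ}
    (hv : v ∈ argminSet (lower p q) (box k) x) :
    upper p q x v = if eval x p = 0 ∧ ∀ j, 0 < eval x (q j) then 1 else 0 := by
  have h := (mem_argminSet_lower_iff p q).1 hv
  have h0 : eval x (p ^ 2) * v 0 = if 0 < eval x (p ^ 2) then 1 else 0 := by
    simpa [weight] using (h 0).2
  have hsucc (j : Fin k) : eval x (q j) * v j.succ = if 0 < eval x (q j) then 1 else 0 := by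
    simpa [weight] using (h j.succ).2
  rw [upper, h0, Finset.prod_congr rfl fun j _ => hsucc j, Fintype.prod_boole]
  split_ifs <;> simp_all

end BasicSemialgebraicBilevel

open BasicSemialgebraicBilevel in
/-- the characteristic function of a basic semi-algebraic set is both the
optimistic and the pessimistic value function of one polynomial bilevel problem with convex
lower-level objective over a box. -/
theorem basic_sa_characteristic_is_value (n : ℕ)
    (p : MvPolynomial (Fin n) ℝ) (k : ℕ) (q : Fin k → MvPolynomial (Fin n) ℝ) :
    ∃ (m : ℕ) (F G : (Fin n → ℝ) → (Fin m → ℝ) → ℝ) (Y : Set (Fin m → ℝ)),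
      IsPolyMap F ∧ IsPolyMap G ∧ (∀ x, ConvexOn ℝ Set.univ (G x)) ∧ IsBox Y ∧
      (∀ x, valOpt F G Y x =
        Set.indicator {x | MvPolynomial.eval x p = 0 ∧ ∀ j, 0 < MvPolynomial.eval x (q j)}
          (fun _ => (1 : EReal)) x) ∧
      (∀ x, valPess F G Y x =
        Set.indicator {x | MvPolynomial.eval x p = 0 ∧ ∀ j, 0 < MvPolynomial.eval x (q j)}
          (fun _ => (1 : EReal)) x) := by
  refine ⟨k + 1, upper p q, lower p q, box k, isPolyMap_upper p q, isPolyMap_lower p q,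
    convexOn_lower p q, isBox_box, fun x => ?_, fun x => ?_⟩
  · rw [valOpt_eq_of_forall_mem_argminSet (argminSet_lower_nonempty p q x)
      fun v hv => upper_eq_of_mem_argminSet p q hv]
    simp [Set.indicator_apply, apply_ite]
  · rw [valPess_eq_of_forall_mem_argminSet (argminSet_lower_nonempty p q x)
      fun v hv => upper_eq_of_mem_argminSet p q hv]
    simp [Set.indicator_apply, apply_ite]
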